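/- With β₀ = 8.6142, λ = 0.44581, α = 0.76975, the quantity 1/β₀ - ((1+2α-2λ)(2(1+α)²+λ(2+α))·e^{3+2α})/(4λ(α-λ)(1+α)²) · ∫_{β₀}^∞ 1/(β e^β) dβ is greater than 0.1039. -/

import Mathlib

/-!
The margin is tiny: the right side is about `0.1039003`, so `E₁(β₀) = ∫_{β₀}^∞ e^{-β}/β dβ`
must be bounded above to a relative accuracy of about `2 · 10⁻⁵`, while the crude bound
`e^{-β₀}/β₀` is off by 10%. A convergent `F(x) = e^{-x} P(x) / (x Q(x))` of the continued
fraction of `E₁` is accurate to about `3 · 10⁻⁶` there, and the identity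
`-F'(x) = e^{-x}/x + 144 e^{-x} / (x Q(x))²` shows `E₁(β₀) ≤ F(β₀)`. The remaining factor
`e^{3 + 2α - β₀} = e^{-4.0747}` is bounded through `e > 2.7182818283` and the cubic Taylor
polynomial of `exp 0.0747`.
-/

open MeasureTheory Set Filter Topology Real

theorem setIntegral_Ioi_le_of_le_deriv {f g g' : ℝ → ℝ} {a l : ℝ}
    (hderiv : ∀ x ∈ Ici a, HasDerivAt g (g' x) x) (hf : ∀ x ∈ Ioi a, 0 ≤ f x)
    (hfg : ∀ x ∈ Ioi a, f x ≤ g' x) (hg : Tendsto g atTop (𝓝 l)) :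
    ∫ x in Ioi a, f x ≤ l - g a := by
  have hg' : ∀ x ∈ Ioi a, 0 ≤ g' x := fun x hx => (hf x hx).trans (hfg x hx)
  rw [← integral_Ioi_of_hasDerivAt_of_nonneg' hderiv hg' hg]
  exact integral_mono_of_nonneg (ae_restrict_of_forall_mem measurableSet_Ioi hf)
    (integrableOn_Ioi_deriv_of_nonneg' hderiv hg' hg)
    (ae_restrict_of_forall_mem measurableSet_Ioi hfg)

/-- A convergent of the continued fraction of `E₁(x) = ∫_x^∞ e^{-t}/t dt`. -/
noncomputable def expIntegralConvergent (x : ℝ) : ℝ :=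
  exp (-x) * (x ^ 3 + 11 * x ^ 2 + 26 * x + 6) / (x * (x ^ 3 + 12 * x ^ 2 + 36 * x + 24))

theorem hasDerivAt_expIntegralConvergent {x : ℝ} (hx : 0 < x) :
    HasDerivAt expIntegralConvergent
      (-(exp (-x) / x + 144 * exp (-x) / (x * (x ^ 3 + 12 * x ^ 2 + 36 * x + 24)) ^ 2)) x := by
  have hP : HasDerivAt (fun x : ℝ => x ^ 3 + 11 * x ^ 2 + 26 * x + 6)
      (3 * x ^ 2 + 22 * x + 26) x := by
    refine ((((hasDerivAt_pow 3 x).fun_add ((hasDerivAt_pow 2 x).const_mul 11)).fun_add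
      ((hasDerivAt_id' x).const_mul 26)).add_const 6).congr_deriv ?_
    push_cast; ring
  have hD : HasDerivAt (fun x : ℝ => x * (x ^ 3 + 12 * x ^ 2 + 36 * x + 24))
      (4 * x ^ 3 + 36 * x ^ 2 + 72 * x + 24) x := by
    refine ((hasDerivAt_id' x).fun_mul ((((hasDerivAt_pow 3 x).fun_add
      ((hasDerivAt_pow 2 x).const_mul 12)).fun_add ((hasDerivAt_id' x).const_mul 36)).add_const
      24)).congr_deriv ?_
    push_cast; ring
  refine (((hasDerivAt_neg x).exp.fun_mul hP).fun_div hD (by positivity)).congr_deriv ?_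
  field_simp
  ring

theorem expIntegralConvergent_nonneg {x : ℝ} (hx : 0 < x) : 0 ≤ expIntegralConvergent x := by
  unfold expIntegralConvergent; positivity

theorem expIntegralConvergent_le_exp_neg_div {x : ℝ} (hx : 0 < x) :
    expIntegralConvergent x ≤ exp (-x) / x := by
  unfold expIntegralConvergent
  rw [div_le_div_iff₀ (by positivity) hx]
  have := exp_pos (-x)
  nlinarith [mul_pos (mul_pos this hx) hx]

theorem tendsto_expIntegralConvergent_atTop : Tendsto expIntegralConvergent atTop (𝓝 0) := by
  refine tendsto_of_tendsto_of_tendsto_of_le_of_le' tendsto_const_nhds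
    tendsto_exp_neg_atTop_nhds_zero ?_ ?_
  · filter_upwards [eventually_gt_atTop 0] with x hx using expIntegralConvergent_nonneg hx
  · filter_upwards [eventually_ge_atTop 1] with x hx
    exact (expIntegralConvergent_le_exp_neg_div (by linarith)).trans
      (div_le_self (exp_pos _).le hx)

theorem setIntegral_Ioi_one_div_mul_exp_le {a : ℝ} (ha : 0 < a) :
    ∫ t in Ioi a, 1 / (t * exp t) ≤ expIntegralConvergent a := by
  have h := setIntegral_Ioi_le_of_le_deriv (f := fun t => 1 / (t * exp t))
    (fun x hx => (hasDerivAt_expIntegralConvergent (ha.trans_le hx)).neg) ?_ ?_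
    tendsto_expIntegralConvergent_atTop.neg
  · simpa using h
  · intro x hx
    have := ha.trans hx
    positivity
  · intro x hx
    have := ha.trans hx
    rw [neg_neg, exp_neg, one_div, mul_inv, ← div_eq_inv_mul]
    exact le_add_of_nonneg_right (by positivity)

theorem exp_neg_nat_add_le {n : ℕ} {z : ℝ} (hz : 0 ≤ z) :
    exp (-(n + z)) ≤ 1 / (2.7182818283 ^ n * (1 + z + z ^ 2 / 2 + z ^ 3 / 6)) := by
  have htaylor : 1 + z + z ^ 2 / 2 + z ^ 3 / 6 ≤ exp z := by
    have := sum_le_exp_of_nonneg hz 4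
    norm_num [Finset.sum_range_succ, Nat.factorial] at this
    linarith
  have hn : (2.7182818283 : ℝ) ^ n ≤ exp n := by
    rw [← exp_one_pow]
    exact pow_le_pow_left₀ (by norm_num) exp_one_gt_d9.le n
  rw [exp_neg, exp_add, ← one_div]
  exact one_div_le_one_div_of_le (by positivity)
    (mul_le_mul hn htaylor (by positivity) (exp_pos _).le)

theorem numeric_integral_bound :
    let β₀ : ℝ := 8.6142
    let lam : ℝ := 0.44581
    let α : ℝ := 0.76975
    (0.1039 : ℝ) <
      1/β₀ - ((1+2*α-2*lam)*(2*(1+α)^2+lam*(2+α)) * Real.exp (3+2*α))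
                / (4*lam*(α-lam)*(1+α)^2)
              * ∫ β in Set.Ioi β₀, 1/(β * Real.exp β) := by
  intro β₀ lam α
  have hint := setIntegral_Ioi_one_div_mul_exp_le (a := β₀) (by norm_num)
  have hexp := exp_neg_nat_add_le (n := 4) (z := 0.0747) (by norm_num)
  have hshift : exp (3 + 2 * α) * exp (-β₀) = exp (-((4 : ℕ) + 0.0747)) := by
    rw [← exp_add]; norm_num [α, β₀]
  have hprod : exp (3 + 2 * α) * ∫ β in Ioi β₀, 1 / (β * exp β)
      ≤ 1 / (2.7182818283 ^ 4 * (1 + 0.0747 + 0.0747 ^ 2 / 2 + 0.0747 ^ 3 / 6)) *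
        ((β₀ ^ 3 + 11 * β₀ ^ 2 + 26 * β₀ + 6) / (β₀ * (β₀ ^ 3 + 12 * β₀ ^ 2 + 36 * β₀ + 24))) := by
    calc _ ≤ exp (3 + 2 * α) * expIntegralConvergent β₀ :=
          mul_le_mul_of_nonneg_left hint (exp_pos _).le
      _ = exp (-((4 : ℕ) + 0.0747)) *
          ((β₀ ^ 3 + 11 * β₀ ^ 2 + 26 * β₀ + 6) / (β₀ * (β₀ ^ 3 + 12 * β₀ ^ 2 + 36 * β₀ + 24))) := by
        rw [expIntegralConvergent, ← hshift]; ring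
      _ ≤ _ := mul_le_mul_of_nonneg_right hexp (by norm_num [β₀])
  norm_num [β₀, lam, α] at hprod ⊢
  linarith
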